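/- arXiv:2105.11190 — 4 statements merged into one kernel-verified Lean document; each statement's English description precedes it below -/
import Mathlib

section
/- Let ⪯ be a linear order on ℕ and let s : ℕ → ℕ be a sequence with s 0 ≺ s 1 ≺ s 2 ≺ ⋯ (strictly ⪯-increasing). Then the set S = { s j : for all i < j, s i < s j } is infinite, and for all x, y ∈ S, x ≤ y if and only if x ⪯ y. -/
/-!
The records of `s` are the indices `j` at which `s j` exceeds every earlier value. Since `s` is
injective its range is unbounded, and the first index at which `s` exceeds a given bound is a
record, so there are arbitrarily large record values. Along the records `s` is increasing for
both `≤` and `⪯`, so both orders on the record values coincide with the order of the indices.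
-/

open Set

def IsRecord {α : Type*} [Preorder α] (s : ℕ → α) (j : ℕ) : Prop :=
  ∀ i < j, s i < s j

theorem exists_isRecord_gt {α : Type*} [LinearOrder α] {s : ℕ → α}
    (hs : ¬BddAbove (range s)) (b : α) : ∃ j, IsRecord s j ∧ b < s j := by
  classical
  have hex : ∃ k, b < s k := by
    simpa using not_bddAbove_iff.mp hs b
  refine ⟨Nat.find hex, fun i hi => ?_, Nat.find_spec hex⟩
  exact (not_lt.mp (Nat.find_min hex hi)).trans_lt (Nat.find_spec hex)

theorem not_bddAbove_recordValues {α : Type*} [LinearOrder α] {s : ℕ → α}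
    (hs : ¬BddAbove (range s)) : ¬BddAbove {x | ∃ j, x = s j ∧ IsRecord s j} := by
  rintro ⟨b, hb⟩
  obtain ⟨j, hj, hbj⟩ := exists_isRecord_gt hs b
  exact (hb ⟨j, rfl, hj⟩).not_gt hbj

theorem IsRecord.le_iff {α : Type*} [LinearOrder α] {s : ℕ → α} {j k : ℕ}
    (hj : IsRecord s j) (hk : IsRecord s k) : s j ≤ s k ↔ j ≤ k := by
  refine ⟨fun hle => not_lt.mp fun hkj => (hj k hkj).not_ge hle, fun hjk => ?_⟩
  rcases hjk.lt_or_eq with hjk | rfl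
  · exact (hk j hjk).le
  · exact le_rfl

theorem rel_apply_iff_le_of_forall_lt {α : Type*} (r : α → α → Prop) [Std.Refl r]
    [Std.Antisymm r] {s : ℕ → α} (hs : ∀ i j, i < j → r (s i) (s j) ∧ s i ≠ s j) {j k : ℕ} :
    r (s j) (s k) ↔ j ≤ k := by
  refine ⟨fun hr => not_lt.mp fun hkj => ?_, fun hjk => ?_⟩
  · exact (hs k j hkj).2 (antisymm (hs k j hkj).1 hr)
  · rcases hjk.lt_or_eq with hjk | rfl
    · exact (hs j k hjk).1
    · exact refl _

theorem stmt_1 (le' : ℕ → ℕ → Prop) (hlin : IsLinearOrder ℕ le') (s : ℕ → ℕ)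
    (hs : ∀ i j : ℕ, i < j → le' (s i) (s j) ∧ s i ≠ s j) :
    {x : ℕ | ∃ j : ℕ, x = s j ∧ ∀ i < j, s i < s j}.Infinite ∧
      ∀ x ∈ {x : ℕ | ∃ j : ℕ, x = s j ∧ ∀ i < j, s i < s j},
        ∀ y ∈ {x : ℕ | ∃ j : ℕ, x = s j ∧ ∀ i < j, s i < s j},
          (x ≤ y ↔ le' x y) := by
  have hinj : Function.Injective s :=
    Function.Injective.of_lt_imp_ne fun i j hij => (hs i j hij).2
  refine ⟨infinite_of_not_bddAbove
    (not_bddAbove_recordValues (infinite_range_of_injective hinj).not_bddAbove), ?_⟩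
  rintro _ ⟨j, rfl, hj⟩ _ ⟨k, rfl, hk⟩
  rw [IsRecord.le_iff hj hk, rel_apply_iff_le_of_forall_lt le' hs]
end

section
/- Let c : ℕ × ℕ → Fin 2 be a colouring of pairs (i.e., only values c(x,y) for x < y matter) that is transitive, meaning that for all x < y < z and i < 2, if c(x,y) = i and c(y,z) = i then c(x,z) = i. Then there exists a linear order ⪯ on ℕ such that for all i < j, i ≺ j if and only if c(i,j) = 0. -/
theorem stmt_2 (c : ℕ × ℕ → Fin 2)
    (htrans : ∀ x y z : ℕ, x < y → y < z → ∀ i : Fin 2,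
      c (x, y) = i → c (y, z) = i → c (x, z) = i) :
    ∃ le : ℕ → ℕ → Prop, IsLinearOrder ℕ le ∧
      ∀ i j : ℕ, i < j → ((le i j ∧ i ≠ j) ↔ c (i, j) = 0) := by
  have h2 : ∀ x : Fin 2, x ≠ 0 → x = 1 := by decide
  set r : ℕ → ℕ → Prop := fun i j =>
    i = j ∨ (i < j ∧ c (i, j) = 0) ∨ (j < i ∧ c (j, i) = 1) with hr
  have htr : ∀ a b d, r a b → r b d → r a d := by
    rintro a b d (rfl | ⟨hab, cab⟩ | ⟨hba, cba⟩) hbd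
    · exact hbd
    · rcases hbd with rfl | ⟨hbd, cbd⟩ | ⟨hdb, cdb⟩
      · exact Or.inr (Or.inl ⟨hab, cab⟩)
      · exact Or.inr (Or.inl ⟨hab.trans hbd, htrans a b d hab hbd 0 cab cbd⟩)
      · -- a < b, d < b
        rcases lt_trichotomy a d with h | rfl | h
        · refine Or.inr (Or.inl ⟨h, ?_⟩)
          by_contra hne
          exact absurd (htrans a d b h hdb 1 (h2 _ hne) cdb) (by simp [cab])
        · exact Or.inl rfl
        · refine Or.inr (Or.inr ⟨h, ?_⟩)
          by_contra hne
          have : c (d, a) = 0 := by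
            rcases Fin.exists_fin_two.mp ⟨c (d, a), rfl⟩ with h0 | h1
            · exact h0
            · exact absurd h1 hne
          exact absurd (htrans d a b h hab 0 this cab) (by simp [cdb])
    · rcases hbd with rfl | ⟨hbd, cbd⟩ | ⟨hdb, cdb⟩
      · exact Or.inr (Or.inr ⟨hba, cba⟩)
      · -- b < a, b < d
        rcases lt_trichotomy a d with h | rfl | h
        · refine Or.inr (Or.inl ⟨h, ?_⟩)
          by_contra hne
          exact absurd (htrans b a d hba h 1 cba (h2 _ hne)) (by simp [cbd])
        · exact Or.inl rfl
        · refine Or.inr (Or.inr ⟨h, ?_⟩)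
          by_contra hne
          have hda : c (d, a) = 0 := by
            rcases Fin.exists_fin_two.mp ⟨c (d, a), rfl⟩ with h0 | h1
            · exact h0
            · exact absurd h1 hne
          exact absurd (htrans b d a hbd h 0 cbd hda) (by simp [cba])
      · exact Or.inr (Or.inr ⟨hdb.trans hba, htrans d b a hdb hba 1 cdb cba⟩)
  have hanti : ∀ a b, r a b → r b a → a = b := by
    rintro a b (rfl | ⟨hab, cab⟩ | ⟨hba, cba⟩) hba'
    · rfl
    · rcases hba' with rfl | ⟨h, hc⟩ | ⟨h, hc⟩
      · rfl
      · omega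
      · simp [cab] at hc
    · rcases hba' with rfl | ⟨h, hc⟩ | ⟨h, hc⟩
      · rfl
      · simp [cba] at hc
      · omega
  have htot : ∀ a b, r a b ∨ r b a := by
    intro a b
    rcases lt_trichotomy a b with h | rfl | h
    · rcases Fin.exists_fin_two.mp ⟨c (a, b), rfl⟩ with h0 | h1
      · exact Or.inl (Or.inr (Or.inl ⟨h, h0⟩))
      · exact Or.inr (Or.inr (Or.inr ⟨h, h1⟩))
    · exact Or.inl (Or.inl rfl)
    · rcases Fin.exists_fin_two.mp ⟨c (b, a), rfl⟩ with h0 | h1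
      · exact Or.inr (Or.inr (Or.inl ⟨h, h0⟩))
      · exact Or.inl (Or.inr (Or.inr ⟨h, h1⟩))
  refine ⟨r, @IsLinearOrder.mk _ _ (@IsPartialOrder.mk _ _ (@IsPreorder.mk _ _ ⟨fun a => Or.inl rfl⟩ ⟨htr⟩) ⟨hanti⟩) ⟨htot⟩, ?_⟩
  · intro i j hij
    constructor
    · rintro ⟨hle, hne⟩
      rcases hle with rfl | ⟨_, h0⟩ | ⟨h, _⟩
      · exact absurd rfl hne
      · exact h0
      · omega
    · intro h0
      exact ⟨Or.inr (Or.inl ⟨hij, h0⟩), hij.ne⟩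
end

section
/- For every colouring c : ℕ × ℕ → Fin 2 there exists an infinite set S ⊆ ℕ such that c is stable on S, i.e., for each x ∈ S there exists y ∈ S such that c(x,z) = c(x,y) for all z ∈ S with z ≥ y. -/
lemma fiber_infinite (c : ℕ × ℕ → Fin 2) (x : ℕ) {T : Set ℕ} (hT : T.Infinite) :
    ∃ i, {y ∈ T | c (x, y) = i}.Infinite := by
  by_contra h
  push_neg at h
  have hsub : T ⊆ {y ∈ T | c (x, y) = 0} ∪ {y ∈ T | c (x, y) = 1} := by
    intro y hy
    have : c (x, y) = 0 ∨ c (x, y) = 1 := by omega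
    rcases this with h0 | h1
    · exact Or.inl ⟨hy, h0⟩
    · exact Or.inr ⟨hy, h1⟩
  exact (hT.mono hsub) ((h 0).union (h 1))

noncomputable def nextSet (c : ℕ × ℕ → Fin 2) (T : {T : Set ℕ // T.Infinite}) :
    {T : Set ℕ // T.Infinite} :=
  let a := sInf T.1
  have hT' : {y ∈ T.1 | a < y}.Infinite := by
    have h1 : (T.1 \ Set.Iic a).Infinite := T.2.diff (Set.finite_Iic a)
    refine h1.mono ?_
    intro y hy
    exact ⟨hy.1, lt_of_not_ge hy.2⟩
  ⟨{y ∈ {y ∈ T.1 | a < y} | c (a, y) = (fiber_infinite c a hT').choose},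
    (fiber_infinite c a hT').choose_spec⟩

lemma nextSet_subset (c : ℕ × ℕ → Fin 2) (T : {T : Set ℕ // T.Infinite}) :
    (nextSet c T).1 ⊆ T.1 := fun _ hy => hy.1.1

lemma nextSet_gt (c : ℕ × ℕ → Fin 2) (T : {T : Set ℕ // T.Infinite}) :
    ∀ y ∈ (nextSet c T).1, sInf T.1 < y := fun _ hy => hy.1.2

lemma nextSet_color (c : ℕ × ℕ → Fin 2) (T : {T : Set ℕ // T.Infinite}) :
    ∀ y ∈ (nextSet c T).1, ∀ z ∈ (nextSet c T).1,
      c (sInf T.1, z) = c (sInf T.1, y) := by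
  intro y hy z hz
  rw [hy.2, hz.2]

theorem stmt_6 (c : ℕ × ℕ → Fin 2) :
    ∃ S : Set ℕ, S.Infinite ∧
      ∀ x ∈ S, ∃ y ∈ S, ∀ z ∈ S, y ≤ z → c (x, z) = c (x, y) := by
  classical
  set Tseq : ℕ → {T : Set ℕ // T.Infinite} :=
    fun n => (nextSet c)^[n] ⟨Set.univ, Set.infinite_univ⟩ with hTseq
  have hsucc : ∀ n, Tseq (n + 1) = nextSet c (Tseq n) := by
    intro n
    simp [hTseq, Function.iterate_succ_apply']
  set xseq : ℕ → ℕ := fun n => sInf (Tseq n).1 with hxseq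
  have hmem : ∀ n, xseq n ∈ (Tseq n).1 := fun n => Nat.sInf_mem (Tseq n).2.nonempty
  have hchain : ∀ n m, n ≤ m → (Tseq m).1 ⊆ (Tseq n).1 := by
    intro n m hnm
    induction m with
    | zero => simp_all
    | succ k ih =>
      rcases Nat.lt_or_ge n (k + 1) with h | h
      · intro y hy
        rw [hsucc k] at hy
        exact ih (Nat.lt_succ_iff.mp h) (nextSet_subset c (Tseq k) hy)
      · have : n = k + 1 := le_antisymm hnm h
        subst this; exact fun _ h => h
  have hlt : ∀ n, xseq n < xseq (n + 1) := by
    intro n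
    have := hmem (n + 1)
    rw [hsucc n] at this
    exact nextSet_gt c (Tseq n) _ this
  have hmono : StrictMono xseq := strictMono_nat_of_lt_succ hlt
  refine ⟨Set.range xseq, Set.infinite_range_of_injective hmono.injective, ?_⟩
  rintro x ⟨n, rfl⟩
  refine ⟨xseq (n + 1), ⟨n + 1, rfl⟩, ?_⟩
  rintro z ⟨m, rfl⟩ hz
  have hm : n + 1 ≤ m := hmono.le_iff_le.mp hz
  have hzmem : xseq m ∈ (Tseq (n + 1)).1 := hchain (n + 1) m hm (hmem m)
  have h1 : xseq m ∈ (nextSet c (Tseq n)).1 := by rwa [← hsucc n]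
  have h2 : xseq (n + 1) ∈ (nextSet c (Tseq n)).1 := by
    have := hmem (n + 1); rwa [hsucc n] at this
  exact nextSet_color c (Tseq n) _ h2 _ h1
end

section
/- Let f : ℕ × ℕ → Fin 2 and let A₀, A₁ ⊆ ℕ be such that for each n and each i ∈ {0,1}, if { s : f(n,s) = i } is infinite then n ∈ A_i, and assume A₀ ∪ A₁ = ℕ. Let C ⊆ ℕ be an infinite set cohesive for the sequence (R_n) where R_n = { s : f(n,s) = 0 }. Then the set B = { n : C ∖ R_n is finite } satisfies B ⊆ A₀ and ℕ ∖ B ⊆ A₁. -/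
theorem stmt_10 (f : ℕ × ℕ → Fin 2) (A₀ A₁ : Set ℕ)
    (h0 : ∀ n : ℕ, {s : ℕ | f (n, s) = 0}.Infinite → n ∈ A₀)
    (h1 : ∀ n : ℕ, {s : ℕ | f (n, s) = 1}.Infinite → n ∈ A₁)
    (hcover : A₀ ∪ A₁ = Set.univ)
    (C : Set ℕ) (hC : C.Infinite)
    (hcoh : ∀ n : ℕ, (C \ {s : ℕ | f (n, s) = 0}).Finite ∨
      (C ∩ {s : ℕ | f (n, s) = 0}).Finite) :
    {n : ℕ | (C \ {s : ℕ | f (n, s) = 0}).Finite} ⊆ A₀ ∧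
      {n : ℕ | (C \ {s : ℕ | f (n, s) = 0}).Finite}ᶜ ⊆ A₁ := by
  constructor
  · intro n hn
    apply h0 n
    have hinf : (C ∩ {s : ℕ | f (n, s) = 0}).Infinite := by
      have h := hC.diff hn
      apply h.mono
      intro x hx
      exact ⟨hx.1, by by_contra hcon; exact hx.2 ⟨hx.1, hcon⟩⟩
    exact hinf.mono Set.inter_subset_right
  · intro n hn
    apply h1 n
    have hinf : (C \ {s : ℕ | f (n, s) = 0}).Infinite := hn
    have : C \ {s : ℕ | f (n, s) = 0} ⊆ {s : ℕ | f (n, s) = 1} := by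
      intro s hs
      have h2 : f (n, s) ≠ 0 := hs.2
      rcases Fin.exists_fin_two.mp ⟨f (n, s), rfl⟩ with h | h
      · exact absurd h h2
      · exact h
    exact hinf.mono this
end
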